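/- arXiv:1503.06715 — 4 statements merged into one kernel-verified Lean document; each statement's English description precedes it below -/
import Mathlib

section
/- Let g, h : (0,1) → ℝ be bounded functions with g ≥ 0, such that (1/(1-t)) ∫_t^1 g(s) ds → 0 and (1/(1-t)) ∫_t^1 h(s) ds → 0 as t → 1⁻. Then there exists a positive monotone function λ : (0,1) → ℝ with λ(t) → ∞ as t → 1⁻, and a sequence of times t̃_k → 1⁻, such that limsup_{k→∞} sup_{τ ∈ (0, 1-t̃_k)} (1/τ) ∫_{t̃_k}^{t̃_k+τ} (λ(s) g(s) + h(s)) ds ≤ 0. -/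
/-!
Pick thresholds `s m → 1` beyond which the tail averages `(1/(1-t)) ∫_t^1 g` are at most `4⁻ᵐ`,
and let `λ = 1 + ∑ₘ 2ᵐ 𝟙_(s m, 1)`. At time `t` the `m`-th summand contributes to the tail average
of `λ g` at most `2ᵐ` times that of `g`, and at most `2⁻ᵐ`; by dominated convergence for series
the tail averages of `f = λ g + h` still tend to `0`.

The times come from a rising-sun argument: if `∫_a^1 f < ε (1 - a)`, a minimiser `T` of
`r ↦ ε r - ∫_a^r f` on `[a, 1]` is not `1`, and minimality says `∫_T^r f ≤ ε (r - T)` for all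
`r ∈ (T, 1]`.
-/

open MeasureTheory Set Filter Topology

theorem integrable_tsum_of_summable_integral_norm {α E : Type*} [MeasurableSpace α]
    {μ : Measure α} [NormedAddCommGroup E] {F : ℕ → α → E} (hF : ∀ i, Integrable (F i) μ)
    (hsum : Summable fun i ↦ ∫ a, ‖F i a‖ ∂μ) (hpt : ∀ᵐ a ∂μ, Summable fun i ↦ F i a) :
    Integrable (fun a ↦ ∑' i, F i a) μ := by
  refine ⟨aestronglyMeasurable_of_tendsto_ae atTop
    (fun n ↦ Finset.aestronglyMeasurable_fun_sum (Finset.range n) fun i _ ↦ (hF i).1)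
    (hpt.mono fun a ha ↦ ha.hasSum.tendsto_sum_nat), ?_⟩
  calc ∫⁻ a, ‖∑' i, F i a‖ₑ ∂μ ≤ ∫⁻ a, ∑' i, ‖F i a‖ₑ ∂μ :=
        lintegral_mono fun _ ↦ enorm_tsum_le_tsum_enorm
    _ = ∑' i, ENNReal.ofReal (∫ a, ‖F i a‖ ∂μ) := by
        rw [lintegral_tsum fun i ↦ (hF i).1.enorm]
        simp_rw [ofReal_integral_norm_eq_lintegral_enorm (hF _)]
    _ = ENNReal.ofReal (∑' i, ∫ a, ‖F i a‖ ∂μ) :=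
        (ENNReal.ofReal_tsum_of_nonneg (fun _ ↦ integral_nonneg fun _ ↦ norm_nonneg _) hsum).symm
    _ < ⊤ := ENNReal.ofReal_lt_top

theorem integrableOn_Ioc_of_forall_abs_le {f : ℝ → ℝ} {a b : ℝ} (hf : Measurable f)
    (hb : ∃ C, ∀ x ∈ Ioo a b, |f x| ≤ C) : IntegrableOn f (Ioc a b) := by
  obtain ⟨C, hC⟩ := hb
  exact (integrableOn_Ioc_iff_integrableOn_Ioo).2 <|
    Measure.integrableOn_of_bounded measure_Ioo_lt_top.ne hf.aestronglyMeasurable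
      ((ae_restrict_mem measurableSet_Ioo).mono hC)

theorem ae_nonneg_restrict_Ioc {g : ℝ → ℝ} {a b t : ℝ} (hg0 : ∀ x ∈ Ioo a b, 0 ≤ g x)
    (ht : a ≤ t) : 0 ≤ᵐ[volume.restrict (Ioc t b)] g := by
  rw [← Measure.restrict_congr_set Ioo_ae_eq_Ioc]
  exact (ae_restrict_mem measurableSet_Ioo).mono fun x hx ↦ hg0 x ⟨ht.trans_lt hx.1, hx.2⟩

theorem exists_forall_setIntegral_Ioc_le_mul_sub {f : ℝ → ℝ} {a b ε : ℝ} (hab : a ≤ b)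
    (hf : IntegrableOn f (Ioc a b)) (h : ∫ x in Ioc a b, f x < ε * (b - a)) :
    ∃ T ∈ Ico a b, ∀ r ∈ Ioc T b, ∫ x in Ioc T r, f x ≤ ε * (r - T) := by
  set ψ : ℝ → ℝ := fun r ↦ ε * r - ∫ x in Ioc a r, f x
  have hψ : ContinuousOn ψ (Icc a b) :=
    (continuousOn_const.mul continuousOn_id).sub
      (intervalIntegral.continuousOn_primitive ((integrableOn_Icc_iff_integrableOn_Ioc).2 hf))
  obtain ⟨T, hT, hmin⟩ := isCompact_Icc.exists_isMinOn (nonempty_Icc.2 hab) hψ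
  have hTb : T < b := by
    refine hT.2.lt_of_ne fun hTb ↦ ?_
    have : ψ T ≤ ψ a := hmin (left_mem_Icc.2 hab)
    simp only [ψ, hTb, Ioc_self, Measure.restrict_empty, integral_zero_measure] at this
    linarith
  refine ⟨T, ⟨hT.1, hTb⟩, fun r hr ↦ ?_⟩
  have hsplit : ∫ x in Ioc a r, f x = (∫ x in Ioc a T, f x) + ∫ x in Ioc T r, f x := by
    rw [← Ioc_union_Ioc_eq_Ioc hT.1 hr.1.le, setIntegral_union (Ioc_disjoint_Ioc_of_le le_rfl)
      measurableSet_Ioc (hf.mono_set (Ioc_subset_Ioc_right hT.2))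
      (hf.mono_set (Ioc_subset_Ioc hT.1 hr.2))]
  have : ψ T ≤ ψ r := hmin ⟨hT.1.trans hr.1.le, hr.2⟩
  simp only [ψ] at this
  linarith

theorem exists_seq_tendsto_forall_Ico {b : ℝ} {p : ℕ → ℝ → Prop}
    (hp : ∀ m, ∀ᶠ t in 𝓝[<] b, p m t) :
    ∃ s : ℕ → ℝ, (∀ m, s m < b) ∧ Tendsto s atTop (𝓝 b) ∧ ∀ m, ∀ t ∈ Ico (s m) b, p m t := by
  have key (m : ℕ) : ∃ c ∈ Ioo (b - 1 / ((m : ℝ) + 1)) b, ∀ t ∈ Ico c b, p m t := by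
    obtain ⟨l, hl, hsub⟩ := mem_nhdsLT_iff_exists_Ioo_subset.1
      ((hp m).and (Ioo_mem_nhdsLT (sub_lt_self b Nat.one_div_pos_of_nat)))
    have hmid : (l + b) / 2 ∈ Ioo l b := ⟨by linarith [mem_Iio.1 hl], by linarith [mem_Iio.1 hl]⟩
    exact ⟨(l + b) / 2, (hsub hmid).2, fun t ht ↦ (hsub ⟨hmid.1.trans_le ht.1, ht.2⟩).1⟩
  choose s hs hsp using key
  refine ⟨s, fun m ↦ (hs m).2, ?_, hsp⟩
  have hlow : Tendsto (fun m : ℕ ↦ b - 1 / ((m : ℝ) + 1)) atTop (𝓝 b) := by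
    simpa using tendsto_const_nhds.sub (tendsto_one_div_add_atTop_nhds_zero_nat (𝕜 := ℝ))
  exact tendsto_of_tendsto_of_tendsto_of_le_of_le hlow tendsto_const_nhds
    (fun m ↦ (hs m).1.le) (fun m ↦ (hs m).2.le)

noncomputable def tailAvg (f : ℝ → ℝ) (t : ℝ) : ℝ := (1 / (1 - t)) * ∫ x in Ioc t 1, f x

theorem eventually_setIntegral_Ioc_lt_of_tendsto_tailAvg {f : ℝ → ℝ}
    (hf : Tendsto (tailAvg f) (𝓝[<] 1) (𝓝 0)) {ε : ℝ} (hε : 0 < ε) :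
    ∀ᶠ t in 𝓝[<] 1, ∫ x in Ioc t 1, f x < ε * (1 - t) := by
  filter_upwards [hf.eventually (gt_mem_nhds hε), self_mem_nhdsWithin] with t ht ht1
  rwa [tailAvg, one_div, inv_mul_lt_iff₀ (sub_pos.2 ht1), mul_comm] at ht

theorem tendsto_tailAvg_add {f₁ f₂ : ℝ → ℝ} (h₁ : IntegrableOn f₁ (Ioc 0 1))
    (h₂ : IntegrableOn f₂ (Ioc 0 1)) (hf₁ : Tendsto (tailAvg f₁) (𝓝[<] 1) (𝓝 0))
    (hf₂ : Tendsto (tailAvg f₂) (𝓝[<] 1) (𝓝 0)) :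
    Tendsto (tailAvg fun x ↦ f₁ x + f₂ x) (𝓝[<] 1) (𝓝 0) := by
  refine (add_zero (0 : ℝ) ▸ hf₁.add hf₂).congr' ?_
  filter_upwards [Ioo_mem_nhdsLT zero_lt_one] with t ht
  have hsub : Ioc t 1 ⊆ Ioc 0 1 := Ioc_subset_Ioc_left ht.1.le
  rw [tailAvg, tailAvg, tailAvg, integral_add (h₁.mono_set hsub) (h₂.mono_set hsub), mul_add]

theorem exists_seq_forall_avg_le_of_tendsto_tailAvg {f : ℝ → ℝ} (hf : IntegrableOn f (Ioc 0 1))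
    (havg : Tendsto (tailAvg f) (𝓝[<] 1) (𝓝 0)) :
    ∃ tt : ℕ → ℝ, (∀ k, tt k ∈ Ioo 0 1) ∧ Tendsto tt atTop (𝓝 1) ∧
      ∀ ε > 0, ∀ᶠ k in atTop, ∀ τ ∈ Ioo 0 (1 - tt k),
        (1 / τ) * ∫ x in Ioc (tt k) (tt k + τ), f x ≤ ε := by
  obtain ⟨a, ha1, ha, hfa⟩ := exists_seq_tendsto_forall_Ico (b := 1)
    (p := fun k t ↦ 0 < t ∧ ∫ x in Ioc t 1, f x < 1 / (k + 1) * (1 - t)) fun k ↦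
      Filter.Eventually.and (mem_of_superset (Ioo_mem_nhdsLT zero_lt_one) fun _ ht ↦ ht.1)
        (eventually_setIntegral_Ioc_lt_of_tendsto_tailAvg havg (by positivity))
  have ha0 (k : ℕ) : 0 < a k := (hfa k (a k) ⟨le_rfl, ha1 k⟩).1
  have hT (k : ℕ) : ∃ T ∈ Ico (a k) 1, ∀ r ∈ Ioc T 1,
      ∫ x in Ioc T r, f x ≤ 1 / (k + 1) * (r - T) :=
    exists_forall_setIntegral_Ioc_le_mul_sub (ha1 k).le
      (hf.mono_set (Ioc_subset_Ioc_left (ha0 k).le)) (hfa k (a k) ⟨le_rfl, ha1 k⟩).2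
  choose tt htt hbound using hT
  refine ⟨tt, fun k ↦ ⟨(ha0 k).trans_le (htt k).1, (htt k).2⟩,
    tendsto_of_tendsto_of_tendsto_of_le_of_le ha tendsto_const_nhds
      (fun k ↦ (htt k).1) (fun k ↦ (htt k).2.le), fun ε hε ↦ ?_⟩
  filter_upwards [(tendsto_one_div_add_atTop_nhds_zero_nat (𝕜 := ℝ)).eventually (gt_mem_nhds hε)]
    with k hk τ hτ
  have := hbound k (tt k + τ) ⟨by linarith [hτ.1], by linarith [hτ.2]⟩
  rw [add_sub_cancel_left] at this
  calc (1 / τ) * ∫ x in Ioc (tt k) (tt k + τ), f x ≤ (1 / τ) * (1 / (k + 1) * τ) := by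
        gcongr
        exact one_div_nonneg.2 hτ.1.le
    _ = 1 / (k + 1) := by field_simp [hτ.1.ne']
    _ ≤ ε := hk.le

noncomputable def thresholdWeight (s : ℕ → ℝ) (x : ℝ) : ℝ :=
  1 + ∑' m, (Ioo (s m) 1).indicator (fun _ ↦ (2 : ℝ) ^ m) x

section thresholdWeight

variable {s : ℕ → ℝ}

theorem one_le_thresholdWeight (x : ℝ) : 1 ≤ thresholdWeight s x :=
  le_add_of_nonneg_right <| tsum_nonneg fun _ ↦ indicator_nonneg (fun _ _ ↦ by positivity) _

theorem summable_indicator_Ioo_pow (hs : Tendsto s atTop (𝓝 1)) (x : ℝ) :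
    Summable fun m ↦ (Ioo (s m) 1).indicator (fun _ ↦ (2 : ℝ) ^ m) x := by
  have hfin : {m | x ∈ Ioo (s m) 1}.Finite := by
    rcases lt_or_ge x 1 with hx | hx
    · refine Set.Finite.subset (s := {m | ¬ x < s m}) ?_
        fun m (hm : x ∈ Ioo (s m) 1) ↦ not_lt.2 hm.1.le
      rw [← eventually_cofinite, Nat.cofinite_eq_atTop]
      exact hs.eventually (lt_mem_nhds hx)
    · simp [hx.not_gt]
  exact summable_of_hasFiniteSupport <| hfin.subset fun m hm ↦ mem_of_indicator_ne_zero hm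

theorem monotoneOn_thresholdWeight (hs : Tendsto s atTop (𝓝 1)) :
    MonotoneOn (thresholdWeight s) (Iio 1) := by
  intro x _ y hy hxy
  refine add_le_add le_rfl ((summable_indicator_Ioo_pow hs x).tsum_le_tsum (fun m ↦ ?_)
    (summable_indicator_Ioo_pow hs y))
  by_cases hm : x ∈ Ioo (s m) 1
  · rw [indicator_of_mem hm, indicator_of_mem (show y ∈ Ioo (s m) 1 from ⟨hm.1.trans_le hxy, hy⟩)]
  · rw [indicator_of_notMem hm]
    exact indicator_nonneg (fun _ _ ↦ by positivity) _

theorem tendsto_thresholdWeight (hs : Tendsto s atTop (𝓝 1)) (hs1 : ∀ m, s m < 1) :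
    Tendsto (thresholdWeight s) (𝓝[<] 1) atTop := by
  refine tendsto_atTop.2 fun M ↦ ?_
  obtain ⟨m, hm⟩ := pow_unbounded_of_one_lt M one_lt_two
  filter_upwards [Ioo_mem_nhdsLT (hs1 m)] with x hx
  calc M ≤ 2 ^ m := hm.le
    _ = (Ioo (s m) 1).indicator (fun _ ↦ (2 : ℝ) ^ m) x :=
        (indicator_of_mem hx fun _ ↦ (2 : ℝ) ^ m).symm
    _ ≤ ∑' m, (Ioo (s m) 1).indicator (fun _ ↦ (2 : ℝ) ^ m) x :=
        (summable_indicator_Ioo_pow hs x).le_tsum m fun _ _ ↦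
          indicator_nonneg (fun _ _ ↦ by positivity) _
    _ ≤ thresholdWeight s x := le_add_of_nonneg_left zero_le_one

theorem thresholdWeight_mul_eq (g : ℝ → ℝ) (x : ℝ) :
    thresholdWeight s x * g x = g x + ∑' m, (Ioo (s m) 1).indicator (fun x ↦ 2 ^ m * g x) x := by
  simp only [thresholdWeight, add_mul, one_mul, ← tsum_mul_right, indicator_mul_left]

theorem setIntegral_Ioc_indicator_Ioo (g : ℝ → ℝ) (m : ℕ) (t : ℝ) :
    ∫ x in Ioc t 1, (Ioo (s m) 1).indicator (fun x ↦ 2 ^ m * g x) x =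
      2 ^ m * ∫ x in Ioc (max t (s m)) 1, g x := by
  rw [setIntegral_indicator measurableSet_Ioo, Ioc_inter_Ioo_of_right_le le_rfl,
    ← integral_Ioc_eq_integral_Ioo, integral_const_mul]

end thresholdWeight

structure TailThresholds (g : ℝ → ℝ) (s : ℕ → ℝ) : Prop where
  lt_one : ∀ m, s m < 1
  tendsto : Tendsto s atTop (𝓝 1)
  setIntegral_le : ∀ m, ∀ t ∈ Ico (s m) 1, ∫ x in Ioc t 1, g x ≤ (1 / 4) ^ m * (1 - t)

namespace TailThresholds

variable {g : ℝ → ℝ} {s : ℕ → ℝ}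

theorem exists_of_tendsto_tailAvg (hg : Tendsto (tailAvg g) (𝓝[<] 1) (𝓝 0)) :
    ∃ s, TailThresholds g s := by
  obtain ⟨s, hs1, hs, hsg⟩ := exists_seq_tendsto_forall_Ico (b := 1)
    (p := fun m t ↦ ∫ x in Ioc t 1, g x ≤ (1 / 4) ^ m * (1 - t)) fun m ↦
      (eventually_setIntegral_Ioc_lt_of_tendsto_tailAvg hg (by positivity)).mono fun _ h ↦ h.le
  exact ⟨s, hs1, hs, hsg⟩

theorem setIntegral_Ioc_max_le (hs : TailThresholds g s) {t : ℝ} (ht1 : t < 1) (m : ℕ) :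
    ∫ x in Ioc (max t (s m)) 1, g x ≤ (1 / 4) ^ m * (1 - t) :=
  (hs.setIntegral_le m _ ⟨le_max_right _ _, max_lt ht1 (hs.lt_one m)⟩).trans <| by
    gcongr; exact le_max_left _ _

theorem integral_norm_indicator_le (hs : TailThresholds g s) (hg0 : ∀ x ∈ Ioo 0 1, 0 ≤ g x)
    {t : ℝ} (ht : 0 ≤ t) (ht1 : t < 1) (m : ℕ) :
    ∫ x in Ioc t 1, ‖(Ioo (s m) 1).indicator (fun x ↦ 2 ^ m * g x) x‖ ≤
      (1 / 2) ^ m * (1 - t) := by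
  have hpos : 0 ≤ᵐ[volume.restrict (Ioc t 1)] (Ioo (s m) 1).indicator fun x ↦ 2 ^ m * g x :=
    (ae_nonneg_restrict_Ioc hg0 ht).mono fun x hx ↦
      indicator_nonneg (fun _ _ ↦ mul_nonneg (by positivity) hx) x
  rw [integral_congr_ae (hpos.mono fun x hx ↦ Real.norm_of_nonneg hx),
    setIntegral_Ioc_indicator_Ioo]
  calc 2 ^ m * ∫ x in Ioc (max t (s m)) 1, g x ≤ 2 ^ m * ((1 / 4) ^ m * (1 - t)) := by
        gcongr; exact hs.setIntegral_Ioc_max_le ht1 m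
    _ = (1 / 2) ^ m * (1 - t) := by
        rw [← mul_assoc, ← mul_pow]; norm_num

theorem summable_integral_norm_indicator (hs : TailThresholds g s)
    (hg0 : ∀ x ∈ Ioo 0 1, 0 ≤ g x) {t : ℝ} (ht : 0 ≤ t) (ht1 : t < 1) :
    Summable fun m ↦ ∫ x in Ioc t 1, ‖(Ioo (s m) 1).indicator (fun x ↦ 2 ^ m * g x) x‖ :=
  (summable_geometric_two.mul_right (1 - t)).of_nonneg_of_le
    (fun _ ↦ integral_nonneg fun _ ↦ norm_nonneg _) (hs.integral_norm_indicator_le hg0 ht ht1)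

theorem integrableOn_tsum_indicator (hs : TailThresholds g s) (hg : IntegrableOn g (Ioc 0 1))
    (hg0 : ∀ x ∈ Ioo 0 1, 0 ≤ g x) {t : ℝ} (ht : 0 ≤ t) (ht1 : t < 1) :
    IntegrableOn (fun x ↦ ∑' m, (Ioo (s m) 1).indicator (fun x ↦ 2 ^ m * g x) x) (Ioc t 1) := by
  refine integrable_tsum_of_summable_integral_norm
    (fun m ↦ ((hg.mono_set (Ioc_subset_Ioc_left ht)).const_mul _).indicator measurableSet_Ioo)
    (hs.summable_integral_norm_indicator hg0 ht ht1) (ae_of_all _ fun x ↦ ?_)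
  simpa [indicator_mul_left, thresholdWeight] using
    (summable_indicator_Ioo_pow hs.tendsto x).mul_right (g x)

theorem integrableOn_thresholdWeight_mul (hs : TailThresholds g s)
    (hg : IntegrableOn g (Ioc 0 1)) (hg0 : ∀ x ∈ Ioo 0 1, 0 ≤ g x) :
    IntegrableOn (fun x ↦ thresholdWeight s x * g x) (Ioc 0 1) := by
  simp_rw [thresholdWeight_mul_eq]
  exact hg.add (hs.integrableOn_tsum_indicator hg hg0 le_rfl zero_lt_one)

theorem setIntegral_thresholdWeight_mul (hs : TailThresholds g s)
    (hg : IntegrableOn g (Ioc 0 1)) (hg0 : ∀ x ∈ Ioo 0 1, 0 ≤ g x)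
    {t : ℝ} (ht : 0 ≤ t) (ht1 : t < 1) :
    ∫ x in Ioc t 1, thresholdWeight s x * g x =
      (∫ x in Ioc t 1, g x) + ∑' m, 2 ^ m * ∫ x in Ioc (max t (s m)) 1, g x := by
  have hgt : IntegrableOn g (Ioc t 1) := hg.mono_set (Ioc_subset_Ioc_left ht)
  simp_rw [thresholdWeight_mul_eq]
  rw [integral_add hgt (hs.integrableOn_tsum_indicator hg hg0 ht ht1),
    ← integral_tsum_of_summable_integral_norm
      (fun m ↦ (hgt.const_mul _).indicator measurableSet_Ioo)
      (hs.summable_integral_norm_indicator hg0 ht ht1)]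
  simp only [setIntegral_Ioc_indicator_Ioo]

theorem tendsto_tsum_setIntegral_Ioc_max (hs : TailThresholds g s)
    (hg : IntegrableOn g (Ioc 0 1)) (hg0 : ∀ x ∈ Ioo 0 1, 0 ≤ g x)
    (hgavg : Tendsto (tailAvg g) (𝓝[<] 1) (𝓝 0)) :
    Tendsto (fun t ↦ ∑' m, 1 / (1 - t) * (2 ^ m * ∫ x in Ioc (max t (s m)) 1, g x))
      (𝓝[<] 1) (𝓝 0) := by
  have hmem : ∀ᶠ t in 𝓝[<] (1 : ℝ), t ∈ Ioo 0 1 := Ioo_mem_nhdsLT zero_lt_one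
  have hnonneg : ∀ᶠ t in 𝓝[<] 1, ∀ m : ℕ,
      0 ≤ 1 / (1 - t) * (2 ^ m * ∫ x in Ioc (max t (s m)) 1, g x) := by
    filter_upwards [hmem] with t ht m
    have : 0 ≤ ∫ x in Ioc (max t (s m)) 1, g x :=
      integral_nonneg_of_ae (ae_nonneg_restrict_Ioc hg0 (ht.1.le.trans (le_max_left _ _)))
    have : 0 < 1 - t := sub_pos.2 ht.2
    positivity
  have hle_avg : ∀ᶠ t in 𝓝[<] 1, ∀ m : ℕ,
      1 / (1 - t) * (2 ^ m * ∫ x in Ioc (max t (s m)) 1, g x) ≤ 2 ^ m * tailAvg g t := by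
    filter_upwards [hmem] with t ht m
    have : ∫ x in Ioc (max t (s m)) 1, g x ≤ ∫ x in Ioc t 1, g x :=
      setIntegral_mono_set (hg.mono_set (Ioc_subset_Ioc_left ht.1.le))
        (ae_nonneg_restrict_Ioc hg0 ht.1.le) (Ioc_subset_Ioc_left (le_max_left _ _)).eventuallyLE
    have : 0 < 1 - t := sub_pos.2 ht.2
    rw [tailAvg, mul_left_comm]
    gcongr
  have hle_geom : ∀ᶠ t in 𝓝[<] 1, ∀ m : ℕ,
      1 / (1 - t) * (2 ^ m * ∫ x in Ioc (max t (s m)) 1, g x) ≤ (1 / 2) ^ m := by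
    filter_upwards [hmem] with t ht m
    have : 0 < 1 - t := sub_pos.2 ht.2
    calc 1 / (1 - t) * (2 ^ m * ∫ x in Ioc (max t (s m)) 1, g x)
        ≤ 1 / (1 - t) * (2 ^ m * ((1 / 4) ^ m * (1 - t))) := by
          gcongr; exact hs.setIntegral_Ioc_max_le ht.2 m
      _ = (1 / 2) ^ m := by
          field_simp
          rw [← mul_pow]; norm_num
  refine tsum_zero (α := ℝ) (β := ℕ) ▸ tendsto_tsum_of_dominated_convergence summable_geometric_two
    (fun m ↦ ?_) ?_
  · exact tendsto_of_tendsto_of_tendsto_of_le_of_le' tendsto_const_nhds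
      (by simpa using hgavg.const_mul (2 ^ m)) (hnonneg.mono fun t h ↦ h m)
      (hle_avg.mono fun t h ↦ h m)
  · filter_upwards [hnonneg, hle_geom] with t h0 h1 m
    rw [Real.norm_of_nonneg (h0 m)]
    exact h1 m

theorem tendsto_tailAvg_thresholdWeight_mul (hs : TailThresholds g s)
    (hg : IntegrableOn g (Ioc 0 1)) (hg0 : ∀ x ∈ Ioo 0 1, 0 ≤ g x)
    (hgavg : Tendsto (tailAvg g) (𝓝[<] 1) (𝓝 0)) :
    Tendsto (tailAvg fun x ↦ thresholdWeight s x * g x) (𝓝[<] 1) (𝓝 0) := by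
  refine (zero_add (0 : ℝ) ▸ hgavg.add (hs.tendsto_tsum_setIntegral_Ioc_max hg hg0 hgavg)).congr' ?_
  filter_upwards [Ioo_mem_nhdsLT zero_lt_one] with t ht
  rw [tailAvg, tailAvg, hs.setIntegral_thresholdWeight_mul hg hg0 ht.1.le ht.2, mul_add,
    ← tsum_mul_left]

end TailThresholds

/-- the real analysis lemma (blow up case). -/
theorem stmt0 (g h : ℝ → ℝ)
    (hgm : Measurable g) (hhm : Measurable h)
    (hgb : ∃ B, ∀ t ∈ Set.Ioo (0:ℝ) 1, |g t| ≤ B)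
    (hhb : ∃ B, ∀ t ∈ Set.Ioo (0:ℝ) 1, |h t| ≤ B)
    (hg0 : ∀ t ∈ Set.Ioo (0:ℝ) 1, 0 ≤ g t)
    (hgavg : Tendsto (fun t => (1 / (1 - t)) * ∫ s in Set.Ioc t 1, g s)
      (nhdsWithin 1 (Set.Iio 1)) (nhds 0))
    (hhavg : Tendsto (fun t => (1 / (1 - t)) * ∫ s in Set.Ioc t 1, h s)
      (nhdsWithin 1 (Set.Iio 1)) (nhds 0)) :
    ∃ lam : ℝ → ℝ, (∀ t ∈ Set.Ioo (0:ℝ) 1, 0 < lam t) ∧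
      MonotoneOn lam (Set.Ioo (0:ℝ) 1) ∧
      Tendsto lam (nhdsWithin 1 (Set.Iio 1)) atTop ∧
      ∃ tt : ℕ → ℝ, (∀ k, tt k ∈ Set.Ioo (0:ℝ) 1) ∧
        Tendsto tt atTop (nhds 1) ∧
        ∀ ε > (0:ℝ), ∀ᶠ k in atTop, ∀ τ ∈ Set.Ioo (0:ℝ) (1 - tt k),
          (1 / τ) * ∫ s in Set.Ioc (tt k) (tt k + τ), (lam s * g s + h s) ≤ ε := by
  obtain ⟨s, hs⟩ := TailThresholds.exists_of_tendsto_tailAvg hgavg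
  have hg := integrableOn_Ioc_of_forall_abs_le hgm hgb
  have hh := integrableOn_Ioc_of_forall_abs_le hhm hhb
  have hlamg := hs.integrableOn_thresholdWeight_mul hg hg0
  obtain ⟨tt, htt, htt1, hbound⟩ := exists_seq_forall_avg_le_of_tendsto_tailAvg (hlamg.add hh)
    (tendsto_tailAvg_add hlamg hh (hs.tendsto_tailAvg_thresholdWeight_mul hg hg0 hgavg) hhavg)
  exact ⟨thresholdWeight s, fun t _ ↦ zero_lt_one.trans_le (one_le_thresholdWeight t),
    (monotoneOn_thresholdWeight hs.tendsto).mono Ioo_subset_Iio_self,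
    tendsto_thresholdWeight hs.tendsto hs.lt_one, tt, htt, htt1, hbound⟩
end

section
/- Let g : (0,1) → ℝ be a bounded nonnegative measurable function with (1/(1-t)) ∫_t^1 g(s) ds → 0 as t → 1⁻. Then there exists a positive monotone function λ : (0,1) → ℝ with λ(t) → ∞ as t → 1⁻, and an increasing sequence t_k → 1⁻, such that (1/(1-t_k)) ∫_{t_k}^1 λ(s) g(s) ds → 0 as k → ∞. -/
open MeasureTheory Set Filter Topology

open scoped ENNReal

/-!
Choose `t₀ < t₁ < ⋯ → 1` so that the tail mass of `g` beyond `tₙ` is at most `(1 - tₙ) / 4ⁿ`,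
and let the weight be the step function `2ⁿ⁺¹` on `(tₙ, tₙ₊₁]`. The weighted mass of the
piece `(tₙ, tₙ₊₁]` is then at most `2 (1 - tₙ) / 2ⁿ`, so summing the geometric series gives a
weighted tail mass beyond `tₖ` of at most `4 (1 - tₖ) / 2ᵏ`, i.e. a weighted average `≤ 4 / 2ᵏ`.
-/

theorem exists_seq_strictMono_tendsto_of_eventually_nhdsLT {α : Type*} [LinearOrder α]
    [TopologicalSpace α] [DenselyOrdered α] [OrderTopology α] [FirstCountableTopology α]
    {a b : α} (hab : a < b) {P : ℕ → α → Prop} (hP : ∀ n, ∀ᶠ x in 𝓝[<] b, P n x) :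
    ∃ t : ℕ → α, StrictMono t ∧ (∀ n, t n ∈ Ioo a b) ∧ Tendsto t atTop (𝓝 b) ∧
      ∀ n, P n (t n) := by
  obtain ⟨u, hu, hu_mem, hu_lim⟩ := exists_seq_strictMono_tendsto' hab
  have hu_lt : Tendsto u atTop (𝓝[<] b) :=
    tendsto_nhdsWithin_iff.2 ⟨hu_lim, .of_forall fun n => (hu_mem n).2⟩
  obtain ⟨φ, hφ, hPφ⟩ := extraction_forall_of_eventually fun n => hu_lt.eventually (hP n)
  exact ⟨u ∘ φ, hu.comp hφ, fun n => hu_mem (φ n), hu_lim.comp hφ.tendsto_atTop, hPφ⟩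

/-- `sInf ∅ = 0`: the value is junk when `s` exceeds every `t n`. -/
noncomputable def firstIndexGE (t : ℕ → ℝ) (s : ℝ) : ℕ := sInf {n | s ≤ t n}

section

variable {t : ℕ → ℝ} {b s : ℝ}

theorem firstIndexGE_le_iff (ht : Monotone t) (hs : ∃ n, s ≤ t n) {n : ℕ} :
    firstIndexGE t s ≤ n ↔ s ≤ t n :=
  ⟨fun h => le_trans (Nat.sInf_mem hs) (ht h), fun h => Nat.sInf_le h⟩

theorem firstIndexGE_eq_succ (ht : Monotone t) {n : ℕ} (hs : s ∈ Ioc (t n) (t (n + 1))) :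
    firstIndexGE t s = n + 1 := by
  have hex : ∃ m, s ≤ t m := ⟨n + 1, hs.2⟩
  refine le_antisymm ((firstIndexGE_le_iff ht hex).2 hs.2) ?_
  by_contra! h
  exact hs.1.not_ge ((firstIndexGE_le_iff ht hex).1 (Nat.le_of_lt_succ h))

theorem exists_le_of_tendsto_of_lt (hlim : Tendsto t atTop (𝓝 b)) (hs : s < b) : ∃ n, s ≤ t n :=
  (hlim.eventually (eventually_ge_nhds hs)).exists

theorem monotoneOn_firstIndexGE (ht : Monotone t) (hlim : Tendsto t atTop (𝓝 b)) :
    MonotoneOn (firstIndexGE t) (Iio b) := fun _ hs _ hs' hss' =>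
  (firstIndexGE_le_iff ht (exists_le_of_tendsto_of_lt hlim hs)).2 <|
    hss'.trans ((firstIndexGE_le_iff ht (exists_le_of_tendsto_of_lt hlim hs')).1 le_rfl)

theorem tendsto_firstIndexGE (ht : Monotone t) (hlim : Tendsto t atTop (𝓝 b))
    (htb : ∀ n, t n < b) : Tendsto (firstIndexGE t) (𝓝[<] b) atTop := by
  refine tendsto_atTop.2 fun N => ?_
  filter_upwards [Ioo_mem_nhdsLT (htb N)] with s hs
  by_contra! h
  exact hs.1.not_ge ((firstIndexGE_le_iff ht (exists_le_of_tendsto_of_lt hlim hs.2)).1 h.le)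

theorem iUnion_Ioc_succ_eq_Ioo (ht : Monotone t) (hlim : Tendsto t atTop (𝓝 b))
    (htb : ∀ n, t n < b) : ⋃ n, Ioc (t n) (t (n + 1)) = Ioo (t 0) b := by
  ext s
  simp only [mem_iUnion]
  constructor
  · rintro ⟨n, hs⟩
    exact ⟨(ht (Nat.zero_le n)).trans_lt hs.1, hs.2.trans_lt (htb _)⟩
  · intro hs
    have hex := exists_le_of_tendsto_of_lt hlim hs.2
    obtain ⟨n, hn⟩ : ∃ n, firstIndexGE t s = n + 1 :=
      Nat.exists_eq_add_one.2 <| Nat.pos_of_ne_zero fun h =>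
        hs.1.not_ge ((firstIndexGE_le_iff ht hex).1 h.le)
    refine ⟨n, ?_, (firstIndexGE_le_iff ht hex).1 hn.le⟩
    by_contra! h
    have := (firstIndexGE_le_iff ht hex).2 h
    omega

theorem setLIntegral_Ioc_mul_le_tsum (ht : Monotone t) (hlim : Tendsto t atTop (𝓝 b))
    (htb : ∀ n, t n < b) {w G : ℝ → ℝ≥0∞} (hG : Measurable G) {W c : ℕ → ℝ≥0∞}
    (hw : ∀ n, ∀ s ∈ Ioc (t n) (t (n + 1)), w s ≤ W n)
    (hc : ∀ n, ∫⁻ s in Ioc (t n) b, G s ≤ c n) :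
    ∫⁻ s in Ioc (t 0) b, w s * G s ≤ ∑' n, W n * c n := by
  have hdisj : Pairwise (Function.onFun Disjoint fun n => Ioc (t n) (t (n + 1))) := by
    simpa only [Order.succ_eq_add_one] using ht.pairwise_disjoint_on_Ioc_succ
  calc ∫⁻ s in Ioc (t 0) b, w s * G s = ∫⁻ s in Ioo (t 0) b, w s * G s :=
        setLIntegral_congr Ioo_ae_eq_Ioc.symm
    _ = ∑' n, ∫⁻ s in Ioc (t n) (t (n + 1)), w s * G s := by
        rw [← iUnion_Ioc_succ_eq_Ioo ht hlim htb,
          lintegral_iUnion (fun _ => measurableSet_Ioc) hdisj]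
    _ ≤ ∑' n, W n * c n := ENNReal.tsum_le_tsum fun n => calc
        ∫⁻ s in Ioc (t n) (t (n + 1)), w s * G s
          ≤ ∫⁻ s in Ioc (t n) (t (n + 1)), W n * G s :=
            setLIntegral_mono (hG.const_mul _) fun s hs => by gcongr; exact hw n s hs
        _ = W n * ∫⁻ s in Ioc (t n) (t (n + 1)), G s := lintegral_const_mul _ hG
        _ ≤ W n * c n := by
            gcongr
            exact (lintegral_mono_set (Ioc_subset_Ioc_right (htb _).le)).trans (hc n)

theorem setLIntegral_Ioc_two_pow_firstIndexGE_mul_le (ht : Monotone t)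
    (hlim : Tendsto t atTop (𝓝 b)) (htb : ∀ n, t n < b) {G : ℝ → ℝ≥0∞} (hG : Measurable G)
    (hsmall : ∀ n, ∫⁻ s in Ioc (t n) b, G s ≤ ENNReal.ofReal ((b - t n) / 4 ^ n)) (k : ℕ) :
    ∫⁻ s in Ioc (t k) b, 2 ^ firstIndexGE t s * G s ≤ ENNReal.ofReal (4 * (b - t k) / 2 ^ k) := by
  have hterm : ∀ j, (2 : ℝ≥0∞) ^ (k + j + 1) * ENNReal.ofReal ((b - t (k + j)) / 4 ^ (k + j))
      ≤ ENNReal.ofReal (4 * (b - t k) / 2 ^ k / 2 / 2 ^ j) := by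
    intro j
    have hb : b - t (k + j) ≤ b - t k := by linarith [ht (Nat.le_add_right k j)]
    rw [← ENNReal.ofReal_ofNat 2, ← ENNReal.ofReal_pow zero_le_two,
      ← ENNReal.ofReal_mul (by positivity)]
    refine ENNReal.ofReal_le_ofReal ?_
    rw [show (4 : ℝ) ^ (k + j) = 2 ^ (k + j) * 2 ^ (k + j) by rw [← mul_pow]; norm_num,
      pow_succ, pow_add]
    field_simp
    nlinarith
  calc ∫⁻ s in Ioc (t k) b, 2 ^ firstIndexGE t s * G s
      ≤ ∑' j, (2 : ℝ≥0∞) ^ (k + j + 1) * ENNReal.ofReal ((b - t (k + j)) / 4 ^ (k + j)) :=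
        setLIntegral_Ioc_mul_le_tsum (t := fun j => t (k + j))
          (fun _ _ h => ht (Nat.add_le_add_left h k))
          (hlim.comp ((tendsto_add_atTop_nat k).congr fun j => add_comm j k)) (fun _ => htb _) hG
          (fun j s hs => by rw [firstIndexGE_eq_succ ht hs]) (fun j => hsmall (k + j))
    _ ≤ ∑' j, ENNReal.ofReal (4 * (b - t k) / 2 ^ k / 2 / 2 ^ j) := ENNReal.tsum_le_tsum hterm
    _ = ENNReal.ofReal (4 * (b - t k) / 2 ^ k) := by
        have hnonneg : ∀ j : ℕ, 0 ≤ 4 * (b - t k) / 2 ^ k / 2 / 2 ^ j := fun j => by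
          have := htb k; positivity
        rw [← ENNReal.ofReal_tsum_of_nonneg hnonneg (summable_geometric_two' _),
          tsum_geometric_two']

theorem tendsto_average_two_pow_firstIndexGE_mul (ht : Monotone t)
    (hlim : Tendsto t atTop (𝓝 b)) (htb : ∀ n, t n < b) {g : ℝ → ℝ} (hgm : Measurable g)
    (hg0 : 0 ≤ᵐ[volume.restrict (Ioc (t 0) b)] g) (hgi : IntegrableOn g (Ioc (t 0) b))
    (hsmall : ∀ n, ∫ s in Ioc (t n) b, g s ≤ (b - t n) / 4 ^ n) :
    Tendsto (fun k => (1 / (b - t k)) * ∫ s in Ioc (t k) b, 2 ^ firstIndexGE t s * g s)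
      atTop (𝓝 0) := by
  have hsub : ∀ k, Ioc (t k) b ⊆ Ioc (t 0) b := fun k => Ioc_subset_Ioc_left (ht k.zero_le)
  have hg0k : ∀ k, 0 ≤ᵐ[volume.restrict (Ioc (t k) b)] g := fun k =>
    ae_restrict_of_ae_restrict_of_subset (hsub k) hg0
  have hwg0 : ∀ k, 0 ≤ᵐ[volume.restrict (Ioc (t k) b)] fun s => 2 ^ firstIndexGE t s * g s :=
    fun k => (hg0k k).mono fun s hs => mul_nonneg (by positivity) hs
  have hgap : ∀ k, 0 < b - t k := fun k => sub_pos.2 (htb k)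
  have hint : ∀ k, ∫ s in Ioc (t k) b, 2 ^ firstIndexGE t s * g s ≤ 4 * (b - t k) / 2 ^ k := by
    intro k
    have hmeas : AEStronglyMeasurable (fun s => (2 : ℝ) ^ firstIndexGE t s * g s)
        (volume.restrict (Ioc (t k) b)) := by
      rw [← Measure.restrict_congr_set Ioo_ae_eq_Ioc]
      refine (AEMeasurable.mul ?_ hgm.aemeasurable).aestronglyMeasurable
      exact aemeasurable_restrict_of_monotoneOn measurableSet_Ioo <|
        (pow_right_mono₀ one_le_two).comp_monotoneOn <|
          (monotoneOn_firstIndexGE ht hlim).mono Ioo_subset_Iio_self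
    rw [integral_eq_lintegral_of_nonneg_ae (hwg0 k) hmeas]
    refine ENNReal.toReal_le_of_le_ofReal (by have := hgap k; positivity) ?_
    calc ∫⁻ s in Ioc (t k) b, ENNReal.ofReal (2 ^ firstIndexGE t s * g s)
        = ∫⁻ s in Ioc (t k) b, 2 ^ firstIndexGE t s * ENNReal.ofReal (g s) :=
          lintegral_congr fun s => by
            rw [ENNReal.ofReal_mul (by positivity), ENNReal.ofReal_pow zero_le_two,
              ENNReal.ofReal_ofNat]
      _ ≤ _ := setLIntegral_Ioc_two_pow_firstIndexGE_mul_le ht hlim htb hgm.ennreal_ofReal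
          (fun n => by
            rw [← ofReal_integral_eq_lintegral_ofReal (hgi.mono_set (hsub n)) (hg0k n)]
            exact ENNReal.ofReal_le_ofReal (hsmall n)) k
  refine squeeze_zero
    (fun k => mul_nonneg (one_div_nonneg.2 (hgap k).le) (integral_nonneg_of_ae (hwg0 k)))
    (fun k => ?_) ((tendsto_const_nhds (x := (4 : ℝ))).div_atTop
      (tendsto_pow_atTop_atTop_of_one_lt one_lt_two))
  calc 1 / (b - t k) * ∫ s in Ioc (t k) b, 2 ^ firstIndexGE t s * g s
      ≤ 1 / (b - t k) * (4 * (b - t k) / 2 ^ k) :=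
        mul_le_mul_of_nonneg_left (hint k) (one_div_nonneg.2 (hgap k).le)
    _ = 4 / 2 ^ k := by field_simp [(hgap k).ne']

end

/-- boosting the weight for the kinetic energy average (blow up case). -/
theorem stmt1 (g : ℝ → ℝ) (hgm : Measurable g)
    (hgb : ∃ B, ∀ t ∈ Set.Ioo (0:ℝ) 1, |g t| ≤ B)
    (hg0 : ∀ t ∈ Set.Ioo (0:ℝ) 1, 0 ≤ g t)
    (hgavg : Tendsto (fun t => (1 / (1 - t)) * ∫ s in Set.Ioc t 1, g s)
      (nhdsWithin 1 (Set.Iio 1)) (nhds 0)) :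
    ∃ lam : ℝ → ℝ, (∀ t ∈ Set.Ioo (0:ℝ) 1, 0 < lam t) ∧
      MonotoneOn lam (Set.Ioo (0:ℝ) 1) ∧
      Tendsto lam (nhdsWithin 1 (Set.Iio 1)) atTop ∧
      ∃ tk : ℕ → ℝ, StrictMono tk ∧ (∀ k, tk k ∈ Set.Ioo (0:ℝ) 1) ∧
        Tendsto tk atTop (nhds 1) ∧
        Tendsto (fun k => (1 / (1 - tk k)) * ∫ s in Set.Ioc (tk k) 1, lam s * g s)
          atTop (nhds 0) := by
  obtain ⟨B, hB⟩ := hgb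
  have htail : ∀ n : ℕ, ∀ᶠ x in 𝓝[<] (1 : ℝ), ∫ s in Ioc x 1, g s ≤ (1 - x) / 4 ^ n := by
    intro n
    filter_upwards [hgavg.eventually (ge_mem_nhds (by positivity : (0 : ℝ) < 1 / 4 ^ n)),
      self_mem_nhdsWithin] with x hx hx1
    rw [one_div_mul_eq_div, div_le_iff₀ (sub_pos.2 hx1)] at hx
    exact hx.trans_eq (by ring)
  obtain ⟨t, ht, ht01, htlim, ht_tail⟩ :=
    exists_seq_strictMono_tendsto_of_eventually_nhdsLT zero_lt_one htail
  have ht1 : ∀ n, t n < 1 := fun n => (ht01 n).2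
  have hmem : ∀ᵐ s ∂volume.restrict (Ioc (t 0) 1), s ∈ Ioo (0 : ℝ) 1 := by
    rw [← Measure.restrict_congr_set Ioo_ae_eq_Ioc]
    exact ae_restrict_of_forall_mem measurableSet_Ioo fun s hs => ⟨(ht01 0).1.trans hs.1, hs.2⟩
  refine ⟨fun s => 2 ^ firstIndexGE t s, fun _ _ => by positivity,
    ((pow_right_mono₀ one_le_two).comp_monotoneOn
      (monotoneOn_firstIndexGE ht.monotone htlim)).mono Ioo_subset_Iio_self,
    (tendsto_pow_atTop_atTop_of_one_lt one_lt_two).comp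
      (tendsto_firstIndexGE ht.monotone htlim ht1),
    t, ht, ht01, htlim, ?_⟩
  exact tendsto_average_two_pow_firstIndexGE_mul ht.monotone htlim ht1 hgm
    (hmem.mono fun s hs => hg0 s hs)
    (Measure.integrableOn_of_bounded measure_Ioc_lt_top.ne hgm.aestronglyMeasurable
      (hmem.mono fun s hs => hB s hs))
    ht_tail
end

section
/- Let g, h : (0,∞) → ℝ be bounded measurable functions with g ≥ 0, such that (1/t) ∫_0^t g(s) ds → 0 and (1/t) ∫_0^t h(s) ds → 0 as t → ∞. Then there exists a positive increasing function λ on (0,∞) with λ(t) → ∞, and a sequence t̃_k → ∞, such that limsup_{k→∞} sup_{τ ∈ (0, t̃_k/4)} (1/τ) ∫_{t̃_k}^{t̃_k+τ} (λ(s) g(s) + h(s)) ds ≤ 0. -/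
open MeasureTheory Set Filter Topology

/-!
Since `g ≥ 0`, a nondecreasing weight satisfies `∫₀ᵗ λ g ≤ λ(t) ∫₀ᵗ g`, so it suffices that
`λ(t)` grows slower than the averages of `g` decay: a step function does this. Then
`F(t) = ∫₀ᵗ (λ g + h)` is continuous with `F(t) = o(t)`, so for every `ε > 0` the function
`F(s) - ε s` tends to `-∞` and attains its maximum on `[R, ∞)` at some `t ≥ R`; at such a
point every forward average of `λ g + h` is at most `ε`.
-/

theorem exists_monotone_tendsto_atTop_mul_tendsto_zero {a : ℝ → ℝ}
    (ha : Tendsto a atTop (𝓝 0)) :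
    ∃ lam : ℝ → ℝ, Monotone lam ∧ (∀ t, 1 ≤ lam t) ∧ Tendsto lam atTop atTop ∧
      Tendsto (fun t => lam t * a t) atTop (𝓝 0) := by
  classical
  have hθ : ∀ n : ℕ, ∃ θ : ℝ, (n : ℝ) ≤ θ ∧ ∀ t ≥ θ, |a t| ≤ 1 / ((n : ℝ) + 2) ^ 2 := by
    intro n
    obtain ⟨θ, hθ⟩ := eventually_atTop.1 <|
      ((tendsto_zero_iff_abs_tendsto_zero a).1 ha).eventually_le_const
        (u := 1 / ((n : ℝ) + 2) ^ 2) (by positivity)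
    exact ⟨max θ n, le_max_right _ _, fun t ht => hθ t (le_of_max_le_left ht)⟩
  choose θ hθ_ge hθ using hθ
  have hex : ∀ t, ∃ n, t < θ n := fun t =>
    let ⟨n, hn⟩ := exists_nat_gt t
    ⟨n, hn.trans_le (hθ_ge n)⟩
  -- The weight is `idx t + 1`; since `θ (idx t - 1) ≤ t`, it satisfies `lam t * |a t| ≤ 1 / lam t`.
  set idx : ℝ → ℕ := fun t => Nat.find (hex t)
  have hidx_top : Tendsto idx atTop atTop := by
    refine tendsto_atTop.2 fun n => ?_
    filter_upwards [(eventually_all_finite (finite_lt_nat n)).2 fun m _ => eventually_ge_atTop (θ m)]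
      with t ht
    exact (Nat.le_find_iff _ _).2 fun m hm => not_lt.2 (ht m hm)
  have hlam_top : Tendsto (fun t => (idx t : ℝ) + 1) atTop atTop :=
    tendsto_atTop_add_const_right _ _ (tendsto_natCast_atTop_atTop.comp hidx_top)
  refine ⟨fun t => idx t + 1,
    fun s t hst => add_le_add_left (Nat.cast_le.2 (Nat.find_mono fun n hn => hst.trans_lt hn)) 1,
    fun t => by simp, hlam_top, ?_⟩
  refine squeeze_zero_norm' ?_ (hlam_top.inv_tendsto_atTop)
  filter_upwards [eventually_ge_atTop (θ 0)] with t ht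
  obtain ⟨k, hk⟩ : ∃ k, idx t = k + 1 :=
    Nat.exists_eq_succ_of_ne_zero fun h0 => not_lt.2 ht (Nat.find_eq_zero (hex t) |>.1 h0)
  have hak : |a t| ≤ 1 / ((idx t : ℝ) + 1) ^ 2 := by
    have := hθ k t (not_lt.1 (Nat.find_min (hex t) (show k < idx t by omega)))
    rw [hk]; push_cast; convert this using 3; ring
  have hpos : (0 : ℝ) < idx t + 1 := by positivity
  rw [Real.norm_eq_abs, abs_mul, abs_of_pos hpos]
  calc ((idx t : ℝ) + 1) * |a t| ≤ ((idx t : ℝ) + 1) * (1 / ((idx t : ℝ) + 1) ^ 2) := by gcongr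
    _ = ((idx t : ℝ) + 1)⁻¹ := by field_simp

theorem integrableOn_Ioc_zero_of_abs_le {f : ℝ → ℝ} {B : ℝ} (hf : Measurable f)
    (hB : ∀ t > 0, |f t| ≤ B) (b : ℝ) : IntegrableOn f (Ioc 0 b) :=
  Measure.integrableOn_of_bounded (by simp) hf.aestronglyMeasurable
    (ae_restrict_of_forall_mem measurableSet_Ioc fun t ht => hB t ht.1)

theorem Monotone.integrableOn_Ioc_mul {lam g : ℝ → ℝ} {a b : ℝ} (hlam : Monotone lam)
    (hg : IntegrableOn g (Ioc a b)) : IntegrableOn (fun t => lam t * g t) (Ioc a b) :=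
  hg.bdd_mul hlam.measurable.aestronglyMeasurable (c := max |lam a| |lam b|) <|
    ae_restrict_of_forall_mem measurableSet_Ioc fun _ ht =>
      abs_le_max_abs_abs (hlam ht.1.le) (hlam ht.2)

theorem setIntegral_mul_le_mul_setIntegral {α : Type*} [MeasurableSpace α] {μ : Measure α}
    {s : Set α} {lam g : α → ℝ} {c : ℝ} (hs : MeasurableSet s) (hg : IntegrableOn g s μ)
    (hg0 : ∀ x ∈ s, 0 ≤ g x) (hlam0 : ∀ x ∈ s, 0 ≤ lam x) (hlam : ∀ x ∈ s, lam x ≤ c) :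
    ∫ x in s, lam x * g x ∂μ ≤ c * ∫ x in s, g x ∂μ := by
  rw [← integral_const_mul]
  exact integral_mono_of_nonneg
    (ae_restrict_of_forall_mem hs fun x hx => mul_nonneg (hlam0 x hx) (hg0 x hx))
    (hg.const_mul c)
    (ae_restrict_of_forall_mem hs fun x hx => mul_le_mul_of_nonneg_right (hlam x hx) (hg0 x hx))

theorem continuousOn_setIntegral_Ioc_zero {f : ℝ → ℝ} (hf : ∀ b, IntegrableOn f (Ioc 0 b)) :
    ContinuousOn (fun t => ∫ s in Ioc 0 t, f s) (Ioi 0) := fun t ht =>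
  ((intervalIntegral.continuousOn_primitive (b := t + 1)
    ((integrableOn_Icc_iff_integrableOn_Ioc).2 (hf _))).continuousAt
    (Icc_mem_nhds ht (lt_add_one t))).continuousWithinAt

theorem setIntegral_Ioc_add_eq_sub {f : ℝ → ℝ} {a t τ : ℝ} (hat : a ≤ t) (hτ : 0 ≤ τ)
    (hf : IntegrableOn f (Ioc a (t + τ))) :
    ∫ s in Ioc t (t + τ), f s = (∫ s in Ioc a (t + τ), f s) - ∫ s in Ioc a t, f s := by
  rw [← Ioc_union_Ioc_eq_Ioc hat (le_add_of_nonneg_right hτ),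
    setIntegral_union (Ioc_disjoint_Ioc_of_le le_rfl) measurableSet_Ioc
      (hf.mono_set (Ioc_subset_Ioc_right (le_add_of_nonneg_right hτ)))
      (hf.mono_set (Ioc_subset_Ioc_left hat)), add_sub_cancel_left]

theorem exists_ge_forall_ge_sub_le_mul_sub {F : ℝ → ℝ} {R ε : ℝ} (hF : ContinuousOn F (Ici R))
    (hlim : Tendsto (fun t => F t / t) atTop (𝓝 0)) (hε : 0 < ε) :
    ∃ t ≥ R, ∀ s ≥ t, F s - F t ≤ ε * (s - t) := by
  set G : ℝ → ℝ := fun s => F s - ε * s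
  have hG : Tendsto G atTop atBot := by
    have := tendsto_id.atTop_mul_neg (neg_lt_zero.2 hε) (by simpa using hlim.sub_const ε)
    refine this.congr' ?_
    filter_upwards [eventually_ne_atTop 0] with s hs
    simp only [G, id]
    field_simp
  obtain ⟨T, hT⟩ := eventually_atTop.1 (hG.eventually_le_atBot (G R))
  obtain ⟨t, ⟨hRt, -⟩, ht⟩ := isCompact_Icc.exists_isMaxOn
    (nonempty_Icc.2 (le_max_left R T))
    ((hF.mono Icc_subset_Ici_self).sub (continuousOn_const.mul continuousOn_id))
  refine ⟨t, hRt, fun s hs => ?_⟩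
  have hGs : G s ≤ G t := by
    rcases le_total s (max R T) with hsT | hsT
    · exact ht ⟨hRt.trans hs, hsT⟩
    · exact (hT s ((le_max_right R T).trans hsT)).trans (ht ⟨le_rfl, le_max_left R T⟩)
  simp only [G] at hGs
  linarith

theorem exists_monotone_tendsto_atTop_setIntegral_mul_div_tendsto_zero {g : ℝ → ℝ}
    (hg0 : ∀ t > 0, 0 ≤ g t) (hg : ∀ b, IntegrableOn g (Ioc 0 b))
    (havg : Tendsto (fun t => (∫ s in Ioc 0 t, g s) / t) atTop (𝓝 0)) :
    ∃ lam : ℝ → ℝ, Monotone lam ∧ (∀ t, 1 ≤ lam t) ∧ Tendsto lam atTop atTop ∧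
      Tendsto (fun t => (∫ s in Ioc 0 t, lam s * g s) / t) atTop (𝓝 0) := by
  obtain ⟨lam, hmono, hlam1, htop, hmul⟩ := exists_monotone_tendsto_atTop_mul_tendsto_zero havg
  have hlam0 : ∀ t, 0 ≤ lam t := fun t => zero_le_one.trans (hlam1 t)
  refine ⟨lam, hmono, hlam1, htop, squeeze_zero' ?_ ?_ hmul⟩
  · filter_upwards [eventually_gt_atTop 0] with t ht
    exact div_nonneg (setIntegral_nonneg measurableSet_Ioc fun s hs =>
      mul_nonneg (hlam0 s) (hg0 s hs.1)) ht.le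
  · filter_upwards [eventually_gt_atTop 0] with t ht
    rw [mul_div_assoc']
    gcongr
    exact setIntegral_mul_le_mul_setIntegral measurableSet_Ioc (hg t) (fun s hs => hg0 s hs.1)
      (fun s _ => hlam0 s) (fun s hs => hmono hs.2)

theorem exists_seq_tendsto_atTop_forall_sub_le_mul_sub {F : ℝ → ℝ} (hF : ContinuousOn F (Ioi 0))
    (hlim : Tendsto (fun t => F t / t) atTop (𝓝 0)) :
    ∃ tt : ℕ → ℝ, (∀ k, 0 < tt k) ∧ Tendsto tt atTop atTop ∧
      ∀ ε > 0, ∀ᶠ k in atTop, ∀ s ≥ tt k, F s - F (tt k) ≤ ε * (s - tt k) := by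
  have : ∀ k : ℕ, ∃ t ≥ (k : ℝ) + 1, ∀ s ≥ t, F s - F t ≤ 1 / ((k : ℝ) + 1) * (s - t) :=
    fun k => exists_ge_forall_ge_sub_le_mul_sub
      (hF.mono fun t ht => lt_of_lt_of_le (by positivity) (mem_Ici.1 ht)) hlim (by positivity)
  choose tt htt_ge htt using this
  refine ⟨tt, fun k => lt_of_lt_of_le (by positivity) (htt_ge k),
    tendsto_atTop_mono htt_ge (tendsto_atTop_add_const_right _ _ tendsto_natCast_atTop_atTop),
    fun ε hε => ?_⟩
  filter_upwards [tendsto_one_div_add_atTop_nhds_zero_nat.eventually_le_const hε] with k hk s hs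
  exact (htt k s hs).trans (mul_le_mul_of_nonneg_right hk (sub_nonneg.2 hs))

/-- the real analysis lemma (global case). -/
theorem stmt2 (g h : ℝ → ℝ)
    (hgm : Measurable g) (hhm : Measurable h)
    (hgb : ∃ B, ∀ t > (0:ℝ), |g t| ≤ B)
    (hhb : ∃ B, ∀ t > (0:ℝ), |h t| ≤ B)
    (hg0 : ∀ t > (0:ℝ), 0 ≤ g t)
    (hgavg : Tendsto (fun t => (1 / t) * ∫ s in Set.Ioc (0:ℝ) t, g s) atTop (nhds 0))
    (hhavg : Tendsto (fun t => (1 / t) * ∫ s in Set.Ioc (0:ℝ) t, h s) atTop (nhds 0)) :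
    ∃ lam : ℝ → ℝ, (∀ t > (0:ℝ), 0 < lam t) ∧
      MonotoneOn lam (Set.Ioi (0:ℝ)) ∧
      Tendsto lam atTop atTop ∧
      ∃ tt : ℕ → ℝ, (∀ k, 0 < tt k) ∧ Tendsto tt atTop atTop ∧
        ∀ ε > (0:ℝ), ∀ᶠ k in atTop, ∀ τ ∈ Set.Ioo (0:ℝ) (tt k / 4),
          (1 / τ) * ∫ s in Set.Ioc (tt k) (tt k + τ), (lam s * g s + h s) ≤ ε := by
  obtain ⟨Bg, hBg⟩ := hgb
  obtain ⟨Bh, hBh⟩ := hhb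
  have hg_int := integrableOn_Ioc_zero_of_abs_le hgm hBg
  have hh_int := integrableOn_Ioc_zero_of_abs_le hhm hBh
  simp only [one_div_mul_eq_div] at hgavg hhavg ⊢
  obtain ⟨lam, hmono, hlam1, htop, hlam_avg⟩ :=
    exists_monotone_tendsto_atTop_setIntegral_mul_div_tendsto_zero hg0 hg_int hgavg
  have hf_int : ∀ b, IntegrableOn (fun s => lam s * g s + h s) (Ioc 0 b) :=
    fun b => (hmono.integrableOn_Ioc_mul (hg_int b)).add (hh_int b)
  have hf_avg : Tendsto (fun t => (∫ s in Ioc 0 t, (lam s * g s + h s)) / t) atTop (𝓝 0) := by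
    simpa only [integral_add (hmono.integrableOn_Ioc_mul (hg_int _)) (hh_int _), add_div,
      add_zero] using hlam_avg.add hhavg
  obtain ⟨tt, htt_pos, htt_top, htt⟩ :=
    exists_seq_tendsto_atTop_forall_sub_le_mul_sub (continuousOn_setIntegral_Ioc_zero hf_int) hf_avg
  refine ⟨lam, fun t _ => zero_lt_one.trans_le (hlam1 t), hmono.monotoneOn _, htop,
    tt, htt_pos, htt_top, fun ε hε => ?_⟩
  filter_upwards [htt ε hε] with k hk τ hτ
  rw [setIntegral_Ioc_add_eq_sub (htt_pos k).le hτ.1.le (hf_int _), div_le_iff₀ hτ.1]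
  simpa only [add_sub_cancel_left] using hk (tt k + τ) (le_add_of_nonneg_right hτ.1.le)
end

section
/- Let g be as in the equivariant wave map setting with discrete zero set 𝒱, and suppose ψ₀ has finite energy E(ψ₀,0) ≤ M, is bounded by a constant depending on M, and δ := inf_{l ∈ 𝒱} |ψ₀(r₀) - l| > 0 for some r₀ > 0. Then for any γ > 1 there exists ε = ε(δ, γ, M, g) > 0 such that ∫_{r₀/γ}^{γ r₀} ((∂_rψ₀)² + g(ψ₀)²/r²) r dr ≥ ε. -/
/-!
On the annulus `r₀/γ < r < γ r₀` the measure `dr / r` has total mass `log γ²`, so the weighted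
Cauchy–Schwarz inequality gives `|ψ₀ r₂ - ψ₀ r₁|² ≤ (∫ (ψ₀')² r dr) · log γ²` there. Either `ψ₀`
moves by `δ/2` somewhere on the annulus, which forces Dirichlet energy at least
`(δ/2)² / log γ²`, or `ψ₀` stays `δ/2`-far from every zero of `g`. In the latter case `ψ₀` takes
values in a compact set on which `g²` is bounded below by some `c > 0`, and the potential term
contributes at least `c · log γ²`.
-/

open MeasureTheory Set Filter Topology

theorem IsCompact.exists_pos_le_norm {X E : Type*} [TopologicalSpace X] [NormedAddCommGroup E]
    {K : Set X} (hK : IsCompact K) {f : X → E} (hf : ContinuousOn f K)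
    (hf0 : ∀ x ∈ K, f x ≠ 0) : ∃ c > (0 : ℝ), ∀ x ∈ K, c ≤ ‖f x‖ := by
  rcases K.eq_empty_or_nonempty with rfl | hne
  · exact ⟨1, one_pos, by simp⟩
  obtain ⟨x₀, hx₀, hmin⟩ := hK.exists_isMinOn hne hf.norm
  exact ⟨‖f x₀‖, norm_pos_iff.mpr (hf0 x₀ hx₀), fun x hx => hmin hx⟩

theorem isCompact_setOf_abs_le_and_forall_le_abs_sub (R η : ℝ) (Z : Set ℝ) :
    IsCompact {x : ℝ | |x| ≤ R ∧ ∀ l ∈ Z, η ≤ |x - l|} := by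
  have hclosed : IsClosed {x : ℝ | |x| ≤ R ∧ ∀ l ∈ Z, η ≤ |x - l|} := by
    simp only [ofPred_and, ofPred_forall]
    exact (isClosed_le continuous_abs continuous_const).inter <| isClosed_iInter fun l =>
      isClosed_iInter fun _ => isClosed_le continuous_const (continuous_id.sub continuous_const).abs
  exact (isCompact_Icc (a := -R) (b := R)).of_isClosed_subset hclosed fun x hx => abs_le.mp hx.1

theorem exists_pos_le_sq_away_from_zeros {g : ℝ → ℝ} (hg : Continuous g) (R : ℝ)
    {η : ℝ} (hη : 0 < η) :
    ∃ c > (0 : ℝ), ∀ x, |x| ≤ R → (∀ l, g l = 0 → η ≤ |x - l|) → c ≤ g x ^ 2 := by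
  obtain ⟨c, hc, hcK⟩ :=
    (isCompact_setOf_abs_le_and_forall_le_abs_sub R η (g ⁻¹' {0})).exists_pos_le_norm
      hg.continuousOn fun x hx hgx => by simpa using (hx.2 x hgx).trans_lt' hη
  refine ⟨c ^ 2, by positivity, fun x hxR hx => ?_⟩
  rw [← sq_abs (g x)]
  exact pow_le_pow_left₀ hc.le (hcK x ⟨hxR, hx⟩) 2

theorem abs_le_mul_sq_mul_add_inv (u : ℝ) {t r : ℝ} (ht : 0 < t) (hr : 0 < r) :
    |u| ≤ t / 2 * (u ^ 2 * r) + 1 / (2 * t) * (1 / r) := by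
  have key : 2 * t * r * |u| ≤ t ^ 2 * r ^ 2 * u ^ 2 + 1 :=
    calc 2 * t * r * |u| ≤ (t * r * |u|) ^ 2 + 1 := by nlinarith [sq_nonneg (t * r * |u| - 1)]
      _ = t ^ 2 * r ^ 2 * u ^ 2 + 1 := by rw [mul_pow, mul_pow, sq_abs]
  calc |u| = 2 * t * r * |u| / (2 * t * r) := by field_simp
    _ ≤ (t ^ 2 * r ^ 2 * u ^ 2 + 1) / (2 * t * r) := by gcongr
    _ = t / 2 * (u ^ 2 * r) + 1 / (2 * t) * (1 / r) := by field_simp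

-- Optimising the AM–GM bound `abs_le_mul_sq_mul_add_inv` over `t` yields Cauchy–Schwarz.
theorem sq_le_mul_of_forall_le {X D L : ℝ} (hX : 0 ≤ X) (hD : 0 ≤ D) (hL : 0 ≤ L)
    (h : ∀ t > 0, X ≤ t / 2 * D + 1 / (2 * t) * L) : X ^ 2 ≤ D * L := by
  rcases hX.eq_or_lt with rfl | hX
  · simpa using mul_nonneg hD hL
  rcases hD.eq_or_lt with rfl | hD
  · have := h ((L + 1) / X) (by positivity)
    rw [zero_mul]
    field_simp at this
    nlinarith
  · have := h (X / D) (by positivity)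
    field_simp at this
    nlinarith

theorem integral_Ioc_one_div {a b : ℝ} (ha : 0 < a) (hab : a ≤ b) :
    ∫ r in Ioc a b, 1 / r = Real.log (b / a) := by
  rw [← intervalIntegral.integral_of_le hab, integral_one_div_of_pos ha (ha.trans_le hab)]

theorem integrableOn_Ioc_one_div {a b : ℝ} (ha : 0 < a) : IntegrableOn (fun r => 1 / r) (Ioc a b) :=
  (ContinuousOn.integrableOn_Icc (continuousOn_const.div continuousOn_id
    fun _ hx => (ha.trans_le hx.1).ne')).mono_set Ioc_subset_Icc_self

section WeightedCauchySchwarz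

variable {f : ℝ → ℝ} {a b : ℝ}

theorem abs_le_mul_sq_mul_add_inv_ae (ha : 0 < a) {t : ℝ} (ht : 0 < t) :
    ∀ᵐ r ∂volume.restrict (Ioc a b), ‖|f r|‖ ≤ t / 2 * (f r ^ 2 * r) + 1 / (2 * t) * (1 / r) :=
  (ae_restrict_iff' measurableSet_Ioc).mpr <| ae_of_all _ fun r hr => by
    simpa only [norm_abs_eq_norm, Real.norm_eq_abs] using
      abs_le_mul_sq_mul_add_inv (f r) ht (ha.trans hr.1)

theorem integrableOn_abs_of_integrableOn_sq_mul (hf : Measurable f) (ha : 0 < a)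
    (h : IntegrableOn (fun r => f r ^ 2 * r) (Ioc a b)) :
    IntegrableOn (fun r => |f r|) (Ioc a b) :=
  ((h.const_mul _).add ((integrableOn_Ioc_one_div ha).const_mul _)).mono'
    hf.abs.aestronglyMeasurable (abs_le_mul_sq_mul_add_inv_ae ha one_pos)

theorem sq_integral_abs_le_integral_sq_mul_mul_log (hf : Measurable f) (ha : 0 < a) (hab : a ≤ b)
    (h : IntegrableOn (fun r => f r ^ 2 * r) (Ioc a b)) :
    (∫ r in Ioc a b, |f r|) ^ 2 ≤ (∫ r in Ioc a b, f r ^ 2 * r) * Real.log (b / a) := by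
  refine sq_le_mul_of_forall_le (integral_nonneg fun _ => abs_nonneg _)
    (setIntegral_nonneg measurableSet_Ioc fun r hr => by have := ha.trans hr.1; positivity)
    (Real.log_nonneg ((one_le_div ha).mpr hab)) fun t ht => ?_
  have hbound := (h.const_mul (t / 2)).add ((integrableOn_Ioc_one_div ha).const_mul (1 / (2 * t)))
  calc ∫ r in Ioc a b, |f r|
      ≤ ∫ r in Ioc a b, t / 2 * (f r ^ 2 * r) + 1 / (2 * t) * (1 / r) :=
        integral_mono_ae (integrableOn_abs_of_integrableOn_sq_mul hf ha h) hbound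
          ((abs_le_mul_sq_mul_add_inv_ae ha ht).mono fun r hr => by
            simpa only [norm_abs_eq_norm, Real.norm_eq_abs, abs_abs] using hr)
    _ = t / 2 * (∫ r in Ioc a b, f r ^ 2 * r) + 1 / (2 * t) * Real.log (b / a) := by
        rw [integral_add (h.const_mul _) ((integrableOn_Ioc_one_div ha).const_mul _),
          integral_const_mul, integral_const_mul, integral_Ioc_one_div ha hab]

end WeightedCauchySchwarz

theorem sq_sub_le_integral_sq_deriv_mul_mul_log {ψ : ℝ → ℝ} {a b r₁ r₂ : ℝ} (ha : 0 < a)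
    (hdiff : ∀ x ∈ Icc a b, DifferentiableAt ℝ ψ x)
    (h : IntegrableOn (fun r => deriv ψ r ^ 2 * r) (Ioc a b))
    (hr₁ : r₁ ∈ Icc a b) (hr₂ : r₂ ∈ Icc a b) :
    (ψ r₂ - ψ r₁) ^ 2 ≤ (∫ r in Ioc a b, deriv ψ r ^ 2 * r) * Real.log (b / a) := by
  have habs := integrableOn_abs_of_integrableOn_sq_mul (measurable_deriv ψ) ha h
  have hsub : uIoc r₁ r₂ ⊆ Ioc a b := Ioc_subset_Ioc (le_min hr₁.1 hr₂.1) (max_le hr₁.2 hr₂.2)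
  have hftc : ∫ x in r₁..r₂, deriv ψ x = ψ r₂ - ψ r₁ :=
    intervalIntegral.integral_deriv_eq_sub (fun x hx => hdiff x (uIcc_subset_Icc hr₁ hr₂ hx))
      (intervalIntegrable_iff.mpr <| (habs.mono_set hsub).mono'
        (measurable_deriv ψ).aestronglyMeasurable (ae_of_all _ fun _ => le_rfl))
  have hle : |ψ r₂ - ψ r₁| ≤ ∫ r in Ioc a b, |deriv ψ r| :=
    calc |ψ r₂ - ψ r₁| ≤ ∫ r in uIoc r₁ r₂, |deriv ψ r| := by
          simpa only [← hftc, Real.norm_eq_abs] using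
            intervalIntegral.norm_integral_le_integral_norm_uIoc (f := deriv ψ) (a := r₁) (b := r₂)
              (μ := volume)
      _ ≤ ∫ r in Ioc a b, |deriv ψ r| :=
          setIntegral_mono_set habs (ae_of_all _ fun _ => abs_nonneg _) hsub.eventuallyLE
  calc (ψ r₂ - ψ r₁) ^ 2 = |ψ r₂ - ψ r₁| ^ 2 := (sq_abs _).symm
    _ ≤ (∫ r in Ioc a b, |deriv ψ r|) ^ 2 := by gcongr
    _ ≤ _ := sq_integral_abs_le_integral_sq_mul_mul_log (measurable_deriv ψ) ha
        (hr₁.1.trans hr₁.2) h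

noncomputable def energyDensity (g ψ : ℝ → ℝ) (r : ℝ) : ℝ :=
  ((deriv ψ r) ^ 2 + (g (ψ r)) ^ 2 / r ^ 2) * r

section EnergyDensity

variable {g ψ : ℝ → ℝ} {a b : ℝ}

theorem sq_deriv_mul_le_energyDensity {r : ℝ} (hr : 0 ≤ r) :
    deriv ψ r ^ 2 * r ≤ energyDensity g ψ r := by
  have : 0 ≤ g (ψ r) ^ 2 / r ^ 2 * r := by positivity
  rw [energyDensity, add_mul]
  linarith

theorem mul_one_div_le_energyDensity {c r : ℝ} (hr : 0 < r) (hc : c ≤ g (ψ r) ^ 2) :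
    c * (1 / r) ≤ energyDensity g ψ r := by
  have : 0 ≤ deriv ψ r ^ 2 * r := by positivity
  have : g (ψ r) ^ 2 / r ^ 2 * r = g (ψ r) ^ 2 * (1 / r) := by field_simp
  have : c * (1 / r) ≤ g (ψ r) ^ 2 * (1 / r) := by gcongr
  rw [energyDensity, add_mul]
  linarith

theorem sq_div_log_le_integral_energyDensity {r₁ r₂ η : ℝ} (ha : 0 < a) (hab : a < b)
    (hdiff : ∀ x ∈ Icc a b, DifferentiableAt ℝ ψ x)
    (hF : IntegrableOn (energyDensity g ψ) (Ioc a b))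
    (hr₁ : r₁ ∈ Icc a b) (hr₂ : r₂ ∈ Icc a b) (hη : η ≤ |ψ r₂ - ψ r₁|) (hη0 : 0 ≤ η) :
    η ^ 2 / Real.log (b / a) ≤ ∫ r in Ioc a b, energyDensity g ψ r := by
  have hpos : ∀ r ∈ Ioc a b, 0 ≤ r := fun r hr => (ha.trans hr.1).le
  have hdir : IntegrableOn (fun r => deriv ψ r ^ 2 * r) (Ioc a b) :=
    hF.mono' (((measurable_deriv ψ).pow_const 2).mul measurable_id).aestronglyMeasurable <|
      (ae_restrict_iff' measurableSet_Ioc).mpr <| ae_of_all _ fun r hr => by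
        rw [Real.norm_eq_abs, abs_of_nonneg (by have := hpos r hr; positivity)]
        exact sq_deriv_mul_le_energyDensity (hpos r hr)
  have hholder := sq_sub_le_integral_sq_deriv_mul_mul_log ha hdiff hdir hr₁ hr₂
  rw [div_le_iff₀ (Real.log_pos ((one_lt_div ha).mpr hab))]
  calc η ^ 2 ≤ (ψ r₂ - ψ r₁) ^ 2 := (pow_le_pow_left₀ hη0 hη 2).trans_eq (sq_abs _)
    _ ≤ (∫ r in Ioc a b, deriv ψ r ^ 2 * r) * Real.log (b / a) := hholder
    _ ≤ (∫ r in Ioc a b, energyDensity g ψ r) * Real.log (b / a) := by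
        gcongr ?_ * _
        · exact Real.log_nonneg ((one_le_div ha).mpr hab.le)
        · exact setIntegral_mono_on hdir hF measurableSet_Ioc fun r hr =>
            sq_deriv_mul_le_energyDensity (hpos r hr)

theorem mul_log_le_integral_energyDensity {c : ℝ} (ha : 0 < a) (hab : a ≤ b)
    (hF : IntegrableOn (energyDensity g ψ) (Ioc a b)) (hc : ∀ r ∈ Ioc a b, c ≤ g (ψ r) ^ 2) :
    c * Real.log (b / a) ≤ ∫ r in Ioc a b, energyDensity g ψ r := by
  rw [← integral_Ioc_one_div ha hab, ← integral_const_mul]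
  exact setIntegral_mono_on ((integrableOn_Ioc_one_div ha).const_mul c) hF measurableSet_Ioc
    fun r hr => mul_one_div_le_energyDensity (ha.trans hr.1) (hc r hr)

end EnergyDensity

/-- concentration of energy away from the zeros of g. -/
theorem stmt12 (g : ℝ → ℝ) (hg : Continuous g) (M M' δ γ : ℝ)
    (hδ : 0 < δ) (hγ : 1 < γ) :
    ∃ ε > (0:ℝ), ∀ (ψ₀ : ℝ → ℝ) (r₀ : ℝ), 0 < r₀ →
      (∀ x ∈ Set.Ioi (0:ℝ), DifferentiableAt ℝ ψ₀ x) →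
      (∀ r > (0:ℝ), |ψ₀ r| ≤ M') →
      IntegrableOn (fun r => ((deriv ψ₀ r) ^ 2 + (g (ψ₀ r)) ^ 2 / r ^ 2) * r)
        (Set.Ioi 0) →
      (∫ r in Set.Ioi (0:ℝ), ((deriv ψ₀ r) ^ 2 + (g (ψ₀ r)) ^ 2 / r ^ 2) * r) ≤ M →
      (∀ l : ℝ, g l = 0 → δ ≤ |ψ₀ r₀ - l|) →
      ε ≤ ∫ r in Set.Ioc (r₀ / γ) (γ * r₀),
            ((deriv ψ₀ r) ^ 2 + (g (ψ₀ r)) ^ 2 / r ^ 2) * r := by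
  obtain ⟨c, hc, hcK⟩ := exists_pos_le_sq_away_from_zeros hg M' (half_pos hδ)
  have hL : 0 < Real.log (γ ^ 2) := Real.log_pos (one_lt_pow₀ hγ two_ne_zero)
  refine ⟨min ((δ / 2) ^ 2 / Real.log (γ ^ 2)) (c * Real.log (γ ^ 2)), by positivity, ?_⟩
  intro ψ₀ r₀ hr₀ hdiff hbd hint _ hdist
  have hγ0 : 0 < γ := one_pos.trans hγ
  have ha : 0 < r₀ / γ := by positivity
  have har₀ : r₀ / γ < r₀ := div_lt_self hr₀ hγ
  have hr₀b : r₀ < γ * r₀ := lt_mul_of_one_lt_left hr₀ hγ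
  have hr₀mem : r₀ ∈ Icc (r₀ / γ) (γ * r₀) := ⟨har₀.le, hr₀b.le⟩
  have hratio : γ * r₀ / (r₀ / γ) = γ ^ 2 := by field_simp
  have hpos : Icc (r₀ / γ) (γ * r₀) ⊆ Ioi 0 := fun x hx => ha.trans_le hx.1
  have hF : IntegrableOn (energyDensity g ψ₀) (Ioc (r₀ / γ) (γ * r₀)) :=
    hint.mono_set (Ioc_subset_Icc_self.trans hpos)
  change _ ≤ ∫ r in _, energyDensity g ψ₀ r
  rw [← hratio]
  by_cases hosc : ∃ r ∈ Icc (r₀ / γ) (γ * r₀), δ / 2 ≤ |ψ₀ r - ψ₀ r₀|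
  · obtain ⟨r, hr, hδr⟩ := hosc
    exact (min_le_left _ _).trans <| sq_div_log_le_integral_energyDensity ha (har₀.trans hr₀b)
      (fun x hx => hdiff x (hpos hx)) hF hr₀mem hr hδr (half_pos hδ).le
  · push Not at hosc
    refine (min_le_right _ _).trans <| mul_log_le_integral_energyDensity ha (har₀.trans hr₀b).le hF
      fun r hr => hcK _ (hbd r (hpos (Ioc_subset_Icc_self hr))) fun l hl => ?_
    have := abs_sub_le (ψ₀ r₀) (ψ₀ r) l
    rw [abs_sub_comm (ψ₀ r₀) (ψ₀ r)] at this
    linarith [hdist l hl, hosc r (Ioc_subset_Icc_self hr)]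
end
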